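/- arXiv:2005.07867 — 2 statements merged into one kernel-verified Lean document; each statement's English description precedes it below -/
import Mathlib

section
/- Let D1 and D2 be Condorcet domains on disjoint finite sets A and B, and let u ∈ D1, v ∈ D2. Then (D1 ⊗ D2)(u,v) := (D1 ⊙ D2) ∪ (u ⊕ v) is a Condorcet domain on A ∪ B, where D1 ⊙ D2 is the set of concatenations xy for x ∈ D1, y ∈ D2, and u ⊕ v is the set of all shuffles of u and v. -/
/-! Linear orders on a finite set `A` are encoded as duplicate-free lists
(top alternative first) whose set of entries is `A`. -/

variable {α β : Type*}

/-- `w` is a (strict) linear order on `A`, written from top to bottom. -/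
def IsLinOrd [DecidableEq α] (A : Finset α) (w : List α) : Prop :=
  w.Nodup ∧ w.toFinset = A

/-- Restriction of the order `w` to the set `B`. -/
def restr [DecidableEq α] (B : Finset α) (w : List α) : List α :=
  w.filter (fun x => decide (x ∈ B))

/-- Strict majority relation of a profile `P` (a list of linear orders):
`a` beats `b` iff strictly more orders of `P` rank `a` above `b`. -/
def Maj [DecidableEq α] (P : List (List α)) (a b : α) : Prop :=
  P.countP (fun w => decide (w.idxOf a < w.idxOf b)) >
    P.countP (fun w => decide (w.idxOf b < w.idxOf a))

/-- `D` is a Condorcet domain on `A`: all members are linear orders on `A` and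
the majority relation of every odd profile over `D` is transitive. -/
def IsCondorcet [DecidableEq α] (A : Finset α) (D : Set (List α)) : Prop :=
  (∀ w ∈ D, IsLinOrd A w) ∧
    ∀ P : List (List α), (∀ w ∈ P, w ∈ D) → Odd P.length →
      ∀ a ∈ A, ∀ b ∈ A, ∀ c ∈ A, Maj P a b → Maj P b c → Maj P a c

/-- The never condition `x N_{a,b,c} i` (1-based position `i`): no order of `D`
restricted to `{a,b,c}` has `x` in the `i`-th position. -/
def Never [DecidableEq α] (D : Set (List α)) (a b c x : α) (i : ℕ) : Prop :=
  ∀ w ∈ D, (restr {a, b, c} w)[i - 1]? ≠ some x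

/-- `D` is a peak-pit domain on `A`: every triple satisfies a never-top or a
never-bottom condition. -/
def PeakPit [DecidableEq α] (A : Finset α) (D : Set (List α)) : Prop :=
  ∀ a ∈ A, ∀ b ∈ A, ∀ c ∈ A, a ≠ b → a ≠ c → b ≠ c →
    ∃ x ∈ ({a, b, c} : Finset α), Never D a b c x 1 ∨ Never D a b c x 3

/-- Concatenation `D1 ⊙ D2` of two domains (all of `A` ranked above all of `B`). -/
def concatDom (D1 D2 : Set (List α)) : Set (List α) :=
  {w | ∃ x ∈ D1, ∃ y ∈ D2, w = x ++ y}

/-- The set `u ⊕ v` of all shuffles of `u ∈ L(A)` and `v ∈ L(B)`. -/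
def shuffles [DecidableEq α] (A B : Finset α) (u v : List α) : Set (List α) :=
  {w | IsLinOrd (A ∪ B) w ∧ restr A w = u ∧ restr B w = v}

/-- The tensor product `(D1 ⊗ D2)(u,v)` of Danilov–Karzanov–Koshevoy. -/
def tensor [DecidableEq α] (A B : Finset α) (D1 D2 : Set (List α))
    (u v : List α) : Set (List α) :=
  concatDom D1 D2 ∪ shuffles A B u v

/-- `D` has maximal width: it contains a pair of completely reversed orders. -/
def MaxWidth (D : Set (List α)) : Prop :=
  ∃ w ∈ D, w.reverse ∈ D

/-- `w'` is obtained from `w` by one swap of adjacent alternatives. -/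
def AdjSwap (w w' : List α) : Prop :=
  ∃ (l r : List α) (x y : α), w = l ++ x :: y :: r ∧ w' = l ++ y :: x :: r

/-- `D` is semi-connected: some order `w ∈ D` is joined to its reverse by a path
inside `D` of adjacent transpositions in which each pair of alternatives is
swapped exactly once (a maximal chain in the weak Bruhat order, of length
`C(|A|,2)`). -/
def SemiConnected (A : Finset α) (D : Set (List α)) : Prop :=
  ∃ (w : List α) (c : ℕ → List α), w ∈ D ∧ c 0 = w ∧
    c (A.card.choose 2) = w.reverse ∧
    (∀ i, i ≤ A.card.choose 2 → c i ∈ D) ∧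
    (∀ i, i < A.card.choose 2 → AdjSwap (c i) (c (i + 1)))

/-- `D` is a maximal Condorcet domain on `A`. -/
def MaxCondorcet [DecidableEq α] (A : Finset α) (D : Set (List α)) : Prop :=
  IsCondorcet A D ∧ ∀ D' : Set (List α), IsCondorcet A D' → D ⊆ D' → D' ⊆ D

/-- Cardinality of the Fishburn domain `F_n` (Galambos–Reiner formula). -/
def fishCard (n : ℕ) : ℕ :=
  (n + 3) * 2 ^ (n - 3) -
    (if Even n then (2 * n - 3) * (n - 2).choose (n / 2 - 1) / 2
     else (n - 1) / 2 * (n - 1).choose ((n - 1) / 2))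


/-! A cycle `a → b → c → a` of the majority relation of an odd profile over the tensor
product is impossible. If `a, b, c` all lie in `A` (or all in `B`), restricting the profile
to `A` gives such a cycle over `D1`, since restriction preserves every pairwise comparison.
Otherwise two of them, `x` and `y`, lie in the same block. If they lie in `A` and `u` ranks
`x` above `y`, every order of the tensor product ranks `x` above `y` or above the third
alternative: a concatenation ranks all of `A` first, a shuffle agrees with `u` on `A`. So `x`
is never last on the triple; dually, for two alternatives of `B`, the lower one in `v` is
never first. Either never condition rules out a cycle by comparing the counts of the
profile. -/

theorem List.idxOf_filter_lt_idxOf_filter_iff [DecidableEq α] {w : List α} {p : α → Bool}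
    {x y : α} (hx : x ∈ w) (hy : y ∈ w) (hxy : x ≠ y) (hpx : p x) (hpy : p y) :
    (w.filter p).idxOf x < (w.filter p).idxOf y ↔ w.idxOf x < w.idxOf y := by
  induction w with
  | nil => simp at hx
  | cons h t ih =>
    by_cases hxh : h = x
    · subst hxh; simp [hpx, List.idxOf_cons_ne _ hxy]
    by_cases hyh : h = y
    · subst hyh; simp [hpy, List.idxOf_cons_ne _ (Ne.symm hxy)]
    have hxt : x ∈ t := by grind
    have hyt : y ∈ t := by grind
    rw [List.idxOf_cons_ne _ hxh, List.idxOf_cons_ne _ hyh, Nat.succ_lt_succ_iff, ← ih hxt hyt]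
    cases hp : p h
    · simp only [List.filter_cons, hp]; rfl
    · simp only [List.filter_cons, hp, if_true, List.idxOf_cons_ne _ hxh,
        List.idxOf_cons_ne _ hyh]
      omega

theorem List.idxOf_lt_idxOf_append [DecidableEq α] {p q : List α} {x y : α}
    (hx : x ∈ p) (hy : y ∉ p) : (p ++ q).idxOf x < (p ++ q).idxOf y := by
  rw [List.idxOf_append_of_mem hx, List.idxOf_append_of_notMem hy]
  exact (List.idxOf_lt_length_iff.2 hx).trans_le (Nat.le_add_right _ _)

section LinOrd

variable [DecidableEq α] {A B S : Finset α} {w p q : List α}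

theorem IsLinOrd.mem (hw : IsLinOrd A w) {x : α} (hx : x ∈ A) : x ∈ w :=
  List.mem_toFinset.1 (hw.2 ▸ hx)

theorem IsLinOrd.idxOf_lt_or_gt (hw : IsLinOrd A w) {x y : α} (hx : x ∈ A) (hxy : x ≠ y) :
    w.idxOf x < w.idxOf y ∨ w.idxOf y < w.idxOf x :=
  lt_or_gt_of_ne fun h => hxy ((List.idxOf_inj (hw.mem hx)).1 h)

theorem IsLinOrd.append (hAB : Disjoint A B) (hp : IsLinOrd A p) (hq : IsLinOrd B q) :
    IsLinOrd (A ∪ B) (p ++ q) := by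
  refine ⟨hp.1.append hq.1 fun x hxp hxq => ?_, by rw [List.toFinset_append, hp.2, hq.2]⟩
  exact Finset.disjoint_left.1 hAB (hp.2 ▸ List.mem_toFinset.2 hxp)
    (hq.2 ▸ List.mem_toFinset.2 hxq)

theorem idxOf_restr_lt_idxOf_restr_iff {x y : α} (hx : x ∈ w) (hy : y ∈ w) (hxy : x ≠ y)
    (hxS : x ∈ S) (hyS : y ∈ S) :
    (restr S w).idxOf x < (restr S w).idxOf y ↔ w.idxOf x < w.idxOf y :=
  List.idxOf_filter_lt_idxOf_filter_iff hx hy hxy (by simpa using hxS) (by simpa using hyS)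

theorem restr_append_of_isLinOrd (hAB : Disjoint A B) (hp : IsLinOrd A p)
    (hq : IsLinOrd B q) : restr A (p ++ q) = p ∧ restr B (p ++ q) = q := by
  have hpA : ∀ x ∈ p, x ∈ A := fun x hx => hp.2 ▸ List.mem_toFinset.2 hx
  have hqB : ∀ x ∈ q, x ∈ B := fun x hx => hq.2 ▸ List.mem_toFinset.2 hx
  simp only [restr, List.filter_append]
  constructor
  · rw [List.filter_eq_self.2 (by simpa using hpA), List.filter_eq_nil_iff.2 (by
      simpa using fun x hx hxA => Finset.disjoint_left.1 hAB hxA (hqB x hx)), List.append_nil]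
  · rw [List.filter_eq_nil_iff.2 (by
      simpa using fun x hx hxB => Finset.disjoint_left.1 hAB (hpA x hx) hxB),
      List.filter_eq_self.2 (by simpa using hqB), List.nil_append]

end LinOrd

section Majority

variable [DecidableEq α] {P : List (List α)} {S : Finset α} {D : Set (List α)} {a b c : α}

theorem maj_irrefl (P : List (List α)) (a : α) : ¬ Maj P a a := by
  unfold Maj; omega

theorem Maj.asymm (h : Maj P a b) : ¬ Maj P b a := by
  unfold Maj at *; omega

theorem maj_or_maj_of_odd (hP : ∀ w ∈ P, a ∈ w ∧ b ∈ w) (hab : a ≠ b)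
    (hodd : Odd P.length) : Maj P a b ∨ Maj P b a := by
  have hsplit := List.length_eq_countP_add_countP
    (fun w : List α => decide (w.idxOf a < w.idxOf b)) (l := P)
  have hcompl : P.countP (fun w => decide ¬(decide (w.idxOf a < w.idxOf b) = true))
      = P.countP (fun w => decide (w.idxOf b < w.idxOf a)) := by
    refine List.countP_congr fun w hw => ?_
    have hne : w.idxOf a ≠ w.idxOf b := fun h => hab ((List.idxOf_inj (hP w hw).1).1 h)
    simp only [decide_eq_true_eq]
    omega
  unfold Maj
  obtain ⟨k, hk⟩ := hodd
  omega

theorem maj_map_restr_iff (hP : ∀ w ∈ P, ∀ x ∈ S, x ∈ w) (ha : a ∈ S) (hb : b ∈ S)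
    (hab : a ≠ b) : Maj (P.map (restr S)) a b ↔ Maj P a b := by
  have hcount : ∀ x ∈ S, ∀ y ∈ S, x ≠ y →
      (P.map (restr S)).countP (fun w => decide (w.idxOf x < w.idxOf y)) =
        P.countP (fun w => decide (w.idxOf x < w.idxOf y)) := by
    intro x hx y hy hxy
    refine List.countP_map.trans (List.countP_congr fun w hw => ?_)
    simpa using idxOf_restr_lt_idxOf_restr_iff (hP w hw x hx) (hP w hw y hy) hxy hx hy
  unfold Maj
  rw [hcount a ha b hb hab, hcount b hb a ha hab.symm]

def MajCycle (P : List (List α)) (a b c : α) : Prop :=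
  Maj P a b ∧ Maj P b c ∧ Maj P c a

theorem MajCycle.rotate (h : MajCycle P a b c) : MajCycle P b c a :=
  ⟨h.2.1, h.2.2, h.1⟩

theorem not_majCycle_of_map_restr (hP : ∀ w ∈ P, ∀ x ∈ S, x ∈ w) (ha : a ∈ S)
    (hb : b ∈ S) (hc : c ∈ S) (h : ¬ MajCycle (P.map (restr S)) a b c) :
    ¬ MajCycle P a b c := by
  rintro ⟨hab, hbc, hca⟩
  have hne : ∀ {x y}, Maj P x y → x ≠ y := by rintro x _ hxy rfl; exact maj_irrefl P x hxy
  exact h ⟨(maj_map_restr_iff hP ha hb (hne hab)).2 hab,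
    (maj_map_restr_iff hP hb hc (hne hbc)).2 hbc, (maj_map_restr_iff hP hc ha (hne hca)).2 hca⟩

theorem not_majCycle_of_never_last
    (h : ∀ w ∈ P, w.idxOf a < w.idxOf b ∨ w.idxOf a < w.idxOf c) : ¬ MajCycle P a b c := by
  rintro ⟨-, hbc, hca⟩
  unfold Maj at hbc hca
  have hca_cb : P.countP (fun w => decide (w.idxOf c < w.idxOf a)) ≤
      P.countP (fun w => decide (w.idxOf c < w.idxOf b)) :=
    List.countP_mono_left fun w hw => by
      simp only [decide_eq_true_eq]; rcases h w hw with h' | h' <;> omega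
  have hbc_ac : P.countP (fun w => decide (w.idxOf b < w.idxOf c)) ≤
      P.countP (fun w => decide (w.idxOf a < w.idxOf c)) :=
    List.countP_mono_left fun w hw => by
      simp only [decide_eq_true_eq]; rcases h w hw with h' | h' <;> omega
  omega

theorem not_majCycle_of_never_first
    (h : ∀ w ∈ P, w.idxOf b < w.idxOf a ∨ w.idxOf c < w.idxOf a) : ¬ MajCycle P a b c := by
  rintro ⟨hab, hbc, -⟩
  unfold Maj at hab hbc
  have hab_cb : P.countP (fun w => decide (w.idxOf a < w.idxOf b)) ≤
      P.countP (fun w => decide (w.idxOf c < w.idxOf b)) :=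
    List.countP_mono_left fun w hw => by
      simp only [decide_eq_true_eq]; rcases h w hw with h' | h' <;> omega
  have hbc_ba : P.countP (fun w => decide (w.idxOf b < w.idxOf c)) ≤
      P.countP (fun w => decide (w.idxOf b < w.idxOf a)) :=
    List.countP_mono_left fun w hw => by
      simp only [decide_eq_true_eq]; rcases h w hw with h' | h' <;> omega
  omega

theorem IsCondorcet.not_majCycle (hD : IsCondorcet S D) (hP : ∀ w ∈ P, w ∈ D)
    (hodd : Odd P.length) (ha : a ∈ S) (hb : b ∈ S) (hc : c ∈ S) : ¬ MajCycle P a b c :=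
  fun ⟨hab, hbc, hca⟩ => (hD.2 P hP hodd a ha b hb c hc hab hbc).asymm hca

theorem IsCondorcet.not_majCycle_of_restr (hD : IsCondorcet S D)
    (hPD : ∀ w ∈ P, restr S w ∈ D) (hP : ∀ w ∈ P, ∀ x ∈ S, x ∈ w)
    (hodd : Odd P.length) (ha : a ∈ S) (hb : b ∈ S) (hc : c ∈ S) : ¬ MajCycle P a b c :=
  not_majCycle_of_map_restr hP ha hb hc
    (hD.not_majCycle (by simpa using hPD) (by simpa using hodd) ha hb hc)

theorem isCondorcet_of_forall_not_majCycle (hlin : ∀ w ∈ D, IsLinOrd S w)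
    (hcyc : ∀ P : List (List α), (∀ w ∈ P, w ∈ D) → Odd P.length →
      ∀ a ∈ S, ∀ b ∈ S, ∀ c ∈ S, ¬ MajCycle P a b c) : IsCondorcet S D := by
  refine ⟨hlin, fun P hP hodd a ha b hb c hc hab hbc => ?_⟩
  by_cases hac : a = c
  · subst hac; exact absurd hbc hab.asymm
  have hmem : ∀ w ∈ P, a ∈ w ∧ c ∈ w := fun w hw => ⟨(hlin w (hP w hw)).mem ha,
    (hlin w (hP w hw)).mem hc⟩
  exact (maj_or_maj_of_odd hmem hac hodd).resolve_right
    fun hca => hcyc P hP hodd a ha b hb c hc ⟨hab, hbc, hca⟩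

end Majority

section Tensor

variable [DecidableEq α] {A B : Finset α} {D1 D2 : Set (List α)} {u v w : List α}
  {P : List (List α)}

theorem isLinOrd_of_mem_tensor (hAB : Disjoint A B) (h1 : IsCondorcet A D1)
    (h2 : IsCondorcet B D2) (hw : w ∈ tensor A B D1 D2 u v) : IsLinOrd (A ∪ B) w := by
  rcases hw with ⟨p, hp, q, hq, rfl⟩ | hw
  · exact (h1.1 p hp).append hAB (h2.1 q hq)
  · exact hw.1

theorem restr_mem_of_mem_tensor (hAB : Disjoint A B) (h1 : IsCondorcet A D1)
    (h2 : IsCondorcet B D2) (hu : u ∈ D1) (hv : v ∈ D2) (hw : w ∈ tensor A B D1 D2 u v) :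
    restr A w ∈ D1 ∧ restr B w ∈ D2 := by
  rcases hw with ⟨p, hp, q, hq, rfl⟩ | ⟨-, hwu, hwv⟩
  · obtain ⟨hpA, hqB⟩ := restr_append_of_isLinOrd hAB (h1.1 p hp) (h2.1 q hq)
    exact ⟨by rwa [hpA], by rwa [hqB]⟩
  · exact ⟨hwu ▸ hu, hwv ▸ hv⟩

theorem idxOf_lt_idxOf_of_mem_concatDom (hAB : Disjoint A B) (h1 : IsCondorcet A D1)
    (hw : w ∈ concatDom D1 D2) {x t : α} (hx : x ∈ A) (ht : t ∈ B) :
    w.idxOf x < w.idxOf t := by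
  obtain ⟨p, hp, q, -, rfl⟩ := hw
  have hpA := (h1.1 p hp).2
  exact List.idxOf_lt_idxOf_append ((h1.1 p hp).mem hx)
    fun htp => Finset.disjoint_left.1 hAB (hpA ▸ List.mem_toFinset.2 htp) ht

theorem never_last_of_mem_tensor (hAB : Disjoint A B) (h1 : IsCondorcet A D1)
    (hw : w ∈ tensor A B D1 D2 u v) {x y t : α} (hx : x ∈ A) (hy : y ∈ A) (ht : t ∈ B)
    (hxy : x ≠ y) (hu : u.idxOf x < u.idxOf y) :
    w.idxOf x < w.idxOf y ∨ w.idxOf x < w.idxOf t := by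
  rcases hw with hw | ⟨hlin, rfl, -⟩
  · exact Or.inr (idxOf_lt_idxOf_of_mem_concatDom hAB h1 hw hx ht)
  · exact Or.inl ((idxOf_restr_lt_idxOf_restr_iff (hlin.mem (Finset.mem_union_left _ hx))
      (hlin.mem (Finset.mem_union_left _ hy)) hxy hx hy).1 hu)

theorem never_first_of_mem_tensor (hAB : Disjoint A B) (h1 : IsCondorcet A D1)
    (hw : w ∈ tensor A B D1 D2 u v) {x y t : α} (hx : x ∈ B) (hy : y ∈ B) (ht : t ∈ A)
    (hxy : x ≠ y) (hv : v.idxOf x < v.idxOf y) :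
    w.idxOf t < w.idxOf y ∨ w.idxOf x < w.idxOf y := by
  rcases hw with hw | ⟨hlin, -, rfl⟩
  · exact Or.inl (idxOf_lt_idxOf_of_mem_concatDom hAB h1 hw ht hy)
  · exact Or.inr ((idxOf_restr_lt_idxOf_restr_iff (hlin.mem (Finset.mem_union_right _ hx))
      (hlin.mem (Finset.mem_union_right _ hy)) hxy hx hy).1 hv)

theorem not_majCycle_tensor_of_two_left (hAB : Disjoint A B) (h1 : IsCondorcet A D1)
    (hu : u ∈ D1) (hP : ∀ w ∈ P, w ∈ tensor A B D1 D2 u v) {x y t : α} (hx : x ∈ A)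
    (hy : y ∈ A) (ht : t ∈ B) : ¬ MajCycle P x y t := by
  intro hcyc
  have hxy : x ≠ y := by rintro rfl; exact maj_irrefl P x hcyc.1
  rcases (h1.1 u hu).idxOf_lt_or_gt hx hxy with hu' | hu'
  · exact not_majCycle_of_never_last
      (fun w hw => never_last_of_mem_tensor hAB h1 (hP w hw) hx hy ht hxy hu') hcyc
  · exact not_majCycle_of_never_last (fun w hw =>
      (never_last_of_mem_tensor hAB h1 (hP w hw) hy hx ht hxy.symm hu').symm) hcyc.rotate

theorem not_majCycle_tensor_of_two_right (hAB : Disjoint A B) (h1 : IsCondorcet A D1)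
    (h2 : IsCondorcet B D2) (hv : v ∈ D2) (hP : ∀ w ∈ P, w ∈ tensor A B D1 D2 u v)
    {x y t : α} (hx : x ∈ A) (hy : y ∈ B) (ht : t ∈ B) : ¬ MajCycle P x y t := by
  intro hcyc
  have hyt : y ≠ t := by rintro rfl; exact maj_irrefl P y hcyc.2.1
  rcases (h2.1 v hv).idxOf_lt_or_gt hy hyt with hv' | hv'
  · exact not_majCycle_of_never_first
      (fun w hw => never_first_of_mem_tensor hAB h1 (hP w hw) hy ht hx hyt hv') hcyc.rotate.rotate
  · exact not_majCycle_of_never_first (fun w hw =>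
      (never_first_of_mem_tensor hAB h1 (hP w hw) ht hy hx hyt.symm hv').symm) hcyc.rotate

end Tensor

/-- `(D1 ⊗ D2)(u,v)` is a Condorcet domain on `A ∪ B`. -/
theorem stmt_5 [DecidableEq α] (A B : Finset α) (hAB : Disjoint A B)
    (D1 D2 : Set (List α))
    (h1 : IsCondorcet A D1) (h2 : IsCondorcet B D2)
    (u v : List α) (hu : u ∈ D1) (hv : v ∈ D2) :
    IsCondorcet (A ∪ B) (tensor A B D1 D2 u v) := by
  refine isCondorcet_of_forall_not_majCycle (fun w hw => isLinOrd_of_mem_tensor hAB h1 h2 hw) ?_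
  intro P hP hodd a ha b hb c hc
  have hmem : ∀ w ∈ P, ∀ x ∈ A ∪ B, x ∈ w :=
    fun w hw x hx => (isLinOrd_of_mem_tensor hAB h1 h2 (hP w hw)).mem hx
  have hrestr := fun w hw => restr_mem_of_mem_tensor hAB h1 h2 hu hv (hP w hw)
  have two_left : ∀ {x y t}, x ∈ A → y ∈ A → t ∈ B → ¬ MajCycle P x y t :=
    not_majCycle_tensor_of_two_left hAB h1 hu hP
  have two_right : ∀ {x y t}, x ∈ A → y ∈ B → t ∈ B → ¬ MajCycle P x y t :=
    not_majCycle_tensor_of_two_right hAB h1 h2 hv hP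
  rcases Finset.mem_union.1 ha with ha | ha <;> rcases Finset.mem_union.1 hb with hb | hb <;>
    rcases Finset.mem_union.1 hc with hc | hc
  · exact h1.not_majCycle_of_restr (fun w hw => (hrestr w hw).1)
      (fun w hw x hx => hmem w hw x (Finset.mem_union_left _ hx)) hodd ha hb hc
  · exact two_left ha hb hc
  · exact fun h => two_left hc ha hb h.rotate.rotate
  · exact two_right ha hb hc
  · exact fun h => two_left hb hc ha h.rotate
  · exact fun h => two_right hb hc ha h.rotate
  · exact fun h => two_right hc ha hb h.rotate.rotate
  · exact h2.not_majCycle_of_restr (fun w hw => (hrestr w hw).2)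
      (fun w hw x hx => hmem w hw x (Finset.mem_union_right _ hx)) hodd ha hb hc
end

section
/- Up to isomorphism (relabelling of alternatives) there are exactly three maximal Condorcet domains on a 3-element set {a,b,c}, namely {abc, acb, cab, cba}, {abc, bca, acb, cba}, and {abc, bac, bca, cba}; in particular every maximal Condorcet domain on 3 alternatives has exactly 4 elements. -/
/-! Linear orders on a finite set `A` are encoded as duplicate-free lists
(top alternative first) whose set of entries is `A`. -/

variable {α β : Type*}

/-! By the theorem of Ward and Sen, a set of linear orders is a Condorcet domain iff it contains
no cyclic triple, i.e. no three orders ranking `x > y > z`, `y > z > x` and `z > x > y`: if an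
odd profile has a majority cycle `x > y > z > x`, a counting argument finds a voter realising each
of the three rotations. On `{a,b,c}` the six orders form two such cycles, `{abc, bca, cab}` and
`{acb, cba, bac}`, so the maximal Condorcet domains are exactly the nine sets obtained by deleting
one order from each cycle. Each of them is a relabelling of one of the three listed domains, and
has four elements. -/

theorem List.Nodup.exists_perm_map_eq {l l' : List α} (hl : l.Nodup) (h : l'.Perm l) :
    ∃ σ : Equiv.Perm α, l.map σ = l' := by
  obtain ⟨σ, hσ⟩ := Equiv.Perm.exists_extending_pair l.get
    (fun i => l'.get (i.cast h.length_eq.symm)) (List.nodup_iff_injective_get.1 hl)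
    ((List.nodup_iff_injective_get.1 (h.nodup_iff.2 hl)).comp (Fin.cast_injective _))
  refine ⟨σ, List.ext_getElem (by simp [h.length_eq]) fun i h₁ h₂ => ?_⟩
  simpa using hσ ⟨i, by simpa using h₁⟩

theorem List.Nodup.map_perm_of_mapsTo {l : List α} (hl : l.Nodup) {σ : Equiv.Perm α}
    (h : ∀ t ∈ l, σ t ∈ l) : (l.map σ).Perm l :=
  (List.subperm_of_subset (hl.map σ.injective) (by simpa [List.subset_def] using h))
    |>.perm_of_length_le (by simp)

/-- The three domains of the theorem, relabelled by `a, b, c ↦ x, y, z`: they consist of all orders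
in which `y` is not first, `x` is not in the middle, and `y` is not last, respectively. -/
def maxDomainsThree (x y z : α) : Set (Set (List α)) :=
  {{[x, y, z], [x, z, y], [z, x, y], [z, y, x]}, {[x, y, z], [y, z, x], [x, z, y], [z, y, x]},
    {[x, y, z], [y, x, z], [y, z, x], [z, y, x]}}

theorem ncard_of_mem_maxDomainsThree {x y z : α} (hxy : x ≠ y) (hxz : x ≠ z) (hyz : y ≠ z)
    {E : Set (List α)} (hE : E ∈ maxDomainsThree x y z) : E.ncard = 4 := by
  rcases hE with rfl | rfl | rfl <;>
    simp [Set.ncard_insert_of_notMem, hxy, hxz, hyz, hxy.symm, hxz.symm, hyz.symm]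

section Condorcet

variable [DecidableEq α]

theorem List.idxOf_ne_idxOf {w : List α} {x y : α} (hxy : x ≠ y) (hy : y ∈ w) :
    w.idxOf x ≠ w.idxOf y := by
  intro h
  have hx : x ∈ w := List.idxOf_lt_length_iff.1 (h ▸ List.idxOf_lt_length_of_mem hy)
  exact hxy ((List.idxOf_inj hx).1 h)

theorem IsLinOrd.mem_iff {A : Finset α} {w : List α} (hw : IsLinOrd A w) {x : α} :
    x ∈ w ↔ x ∈ A := by
  rw [← hw.2, List.mem_toFinset]

theorem IsLinOrd.length_eq {A : Finset α} {w : List α} (hw : IsLinOrd A w) :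
    w.length = A.card := by
  rw [← hw.2, List.toFinset_card_of_nodup hw.1]

theorem isLinOrd_toFinset_iff {l w : List α} (hl : l.Nodup) : IsLinOrd l.toFinset w ↔ w.Perm l :=
  ⟨fun hw => List.perm_of_nodup_nodup_toFinset_eq hw.1 hl hw.2,
    fun h => ⟨h.nodup_iff.2 hl, List.toFinset_eq_of_perm _ _ h⟩⟩

theorem isLinOrd_three_iff {a b c : α} (hab : a ≠ b) (hac : a ≠ c) (hbc : b ≠ c) {w : List α} :
    IsLinOrd {a, b, c} w ↔ w = [a, b, c] ∨ w = [b, a, c] ∨ w = [c, b, a] ∨ w = [b, c, a] ∨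
      w = [c, a, b] ∨ w = [a, c, b] := by
  have hnd : [a, b, c].Nodup := by simp [hab, hac, hbc]
  rw [show ({a, b, c} : Finset α) = [a, b, c].toFinset by simp, isLinOrd_toFinset_iff hnd,
    ← List.mem_permutations]
  simp [List.permutations]

def RanksInOrder (w : List α) (x y z : α) : Prop :=
  w.idxOf x < w.idxOf y ∧ w.idxOf y < w.idxOf z

/-- Sen's cyclic pattern (a Latin square) on the alternatives `x, y, z`. -/
def HasCyclicTriple (D : Set (List α)) (x y z : α) : Prop :=
  ∃ u ∈ D, ∃ v ∈ D, ∃ w ∈ D,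
    RanksInOrder u x y z ∧ RanksInOrder v y z x ∧ RanksInOrder w z x y

theorem RanksInOrder.ne {w : List α} {x y z : α} (h : RanksInOrder w x y z) :
    x ≠ y ∧ x ≠ z ∧ y ≠ z := by
  unfold RanksInOrder at h
  refine ⟨?_, ?_, ?_⟩ <;> rintro rfl <;> omega

theorem RanksInOrder.eq_of_isLinOrd {A : Finset α} {w : List α} {x y z : α}
    (h : RanksInOrder w x y z) (hw : IsLinOrd A w) (hA : A.card = 3) (hz : z ∈ A) :
    w = [x, y, z] := by
  obtain ⟨hxy, hyz⟩ := h
  have hlen := hw.length_eq.trans hA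
  have hzlt := List.idxOf_lt_length_of_mem (hw.mem_iff.2 hz)
  have hget : ∀ t, w.idxOf t < 3 → w[w.idxOf t]? = some t := fun t ht =>
    List.getElem?_eq_some_iff.2 ⟨by omega, List.getElem_idxOf _⟩
  have hx := hget x (by omega)
  have hy := hget y (by omega)
  have hz := hget z (by omega)
  obtain ⟨p, q, r, rfl⟩ := List.length_eq_three.1 hlen
  rw [show List.idxOf x [p, q, r] = 0 by omega] at hx
  rw [show List.idxOf y [p, q, r] = 1 by omega] at hy
  rw [show List.idxOf z [p, q, r] = 2 by omega] at hz
  simp_all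

theorem ranksInOrder_triple {x y z : α} (hxy : x ≠ y) (hxz : x ≠ z) (hyz : y ≠ z) :
    RanksInOrder [x, y, z] x y z := by
  simp [RanksInOrder, List.idxOf_cons_ne, hxy, hxz, hyz]

theorem Maj.ne {P : List (List α)} {x y : α} (h : Maj P x y) : x ≠ y := by
  rintro rfl
  exact lt_irrefl _ h

theorem Maj.asymm_s15 {P : List (List α)} {x y : α} (h : Maj P x y) : ¬Maj P y x :=
  lt_asymm h

theorem exists_ranksInOrder_of_maj {P : List (List α)} {x y z : α} (hy : ∀ w ∈ P, y ∈ w)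
    (hxy : Maj P x y) (hyz : Maj P y z) : ∃ w ∈ P, RanksInOrder w x y z := by
  -- Otherwise #(x over y) ≤ #(z over y) < #(y over z) ≤ #(y over x).
  by_contra! h
  have hle₁ : P.countP (fun w => decide (w.idxOf x < w.idxOf y)) ≤
      P.countP (fun w => decide (w.idxOf z < w.idxOf y)) := by
    refine List.countP_mono_left fun w hw hlt => ?_
    simp only [decide_eq_true_eq] at hlt ⊢
    have hne := List.idxOf_ne_idxOf hyz.ne.symm (hy w hw)
    have hnot : ¬w.idxOf y < w.idxOf z := fun hlt' => h w hw ⟨hlt, hlt'⟩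
    omega
  have hle₂ : P.countP (fun w => decide (w.idxOf y < w.idxOf z)) ≤
      P.countP (fun w => decide (w.idxOf y < w.idxOf x)) := by
    refine List.countP_mono_left fun w hw hlt => ?_
    simp only [decide_eq_true_eq] at hlt ⊢
    have hne := List.idxOf_ne_idxOf hxy.ne (hy w hw)
    have hnot : ¬w.idxOf x < w.idxOf y := fun hlt' => h w hw ⟨hlt', hlt⟩
    omega
  unfold Maj at hxy hyz
  omega

theorem maj_or_maj_of_odd_s15 {P : List (List α)} {x y : α} (hxy : x ≠ y) (hy : ∀ w ∈ P, y ∈ w)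
    (hodd : Odd P.length) : Maj P x y ∨ Maj P y x := by
  have hsum := List.length_eq_countP_add_countP (fun w => decide (w.idxOf x < w.idxOf y)) (l := P)
  have hcompl : P.countP (fun w => decide ¬decide (w.idxOf x < w.idxOf y) = true) =
      P.countP (fun w => decide (w.idxOf y < w.idxOf x)) :=
    List.countP_congr fun w hw => by
      have := List.idxOf_ne_idxOf hxy (hy w hw)
      simp only [decide_eq_true_eq]
      omega
  obtain ⟨k, hk⟩ := hodd
  unfold Maj
  omega

theorem maj_of_cyclic {u v w : List α} {x y z : α} (hu : RanksInOrder u x y z)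
    (hv : RanksInOrder v y z x) (hw : RanksInOrder w z x y) :
    Maj [u, v, w] x y ∧ Maj [u, v, w] y z ∧ ¬Maj [u, v, w] x z := by
  unfold RanksInOrder at hu hv hw
  simp only [Maj, List.countP_cons, List.countP_nil, decide_eq_true_eq]
  refine ⟨?_, ?_, ?_⟩ <;> split_ifs <;> omega

theorem isCondorcet_iff_forall_not_hasCyclicTriple {A : Finset α} {D : Set (List α)} :
    IsCondorcet A D ↔
      (∀ w ∈ D, IsLinOrd A w) ∧ ∀ x ∈ A, ∀ y ∈ A, ∀ z ∈ A, ¬HasCyclicTriple D x y z := by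
  refine ⟨fun hD => ⟨hD.1, ?_⟩, fun ⟨hlin, hD⟩ => ⟨hlin, ?_⟩⟩
  · rintro x hx y hy z hz ⟨u, hu, v, hv, w, hw, hxyz, hyzx, hzxy⟩
    obtain ⟨hxy, hyz, hxz⟩ := maj_of_cyclic hxyz hyzx hzxy
    refine hxz (hD.2 [u, v, w] ?_ ⟨1, rfl⟩ x hx y hy z hz hxy hyz)
    simp only [List.mem_cons, List.not_mem_nil, or_false]
    rintro _ (rfl | rfl | rfl) <;> assumption
  · intro P hP hodd x hx y hy z hz hxy hyz
    have hmem : ∀ t ∈ A, ∀ w ∈ P, t ∈ w := fun t ht w hw => (hlin w (hP w hw)).mem_iff.2 ht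
    by_contra hxz
    have hne : x ≠ z := by
      rintro rfl
      exact hxy.asymm_s15 hyz
    have hzx := (maj_or_maj_of_odd_s15 hne (hmem z hz) hodd).resolve_left hxz
    obtain ⟨u, hu, hxyz⟩ := exists_ranksInOrder_of_maj (hmem y hy) hxy hyz
    obtain ⟨v, hv, hyzx⟩ := exists_ranksInOrder_of_maj (hmem z hz) hyz hzx
    obtain ⟨w, hw, hzxy⟩ := exists_ranksInOrder_of_maj (hmem x hx) hzx hxy
    exact hD x hx y hy z hz ⟨u, hP u hu, v, hP v hv, w, hP w hw, hxyz, hyzx, hzxy⟩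

theorem isCondorcet_three_iff {a b c : α} (hab : a ≠ b) (hac : a ≠ c) (hbc : b ≠ c)
    {D : Set (List α)} :
    IsCondorcet {a, b, c} D ↔ (∀ w ∈ D, IsLinOrd {a, b, c} w) ∧
      ¬{[a, b, c], [b, c, a], [c, a, b]} ⊆ D ∧ ¬{[a, c, b], [c, b, a], [b, a, c]} ⊆ D := by
  rw [isCondorcet_iff_forall_not_hasCyclicTriple]
  refine and_congr_right fun hlin => ⟨fun h => ⟨fun hsub => ?_, fun hsub => ?_⟩, ?_⟩
  · simp only [Set.insert_subset_iff, Set.singleton_subset_iff] at hsub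
    exact h a (by simp) b (by simp) c (by simp) ⟨_, hsub.1, _, hsub.2.1, _, hsub.2.2,
      ranksInOrder_triple hab hac hbc, ranksInOrder_triple hbc hab.symm hac.symm,
      ranksInOrder_triple hac.symm hbc.symm hab⟩
  · simp only [Set.insert_subset_iff, Set.singleton_subset_iff] at hsub
    exact h a (by simp) c (by simp) b (by simp) ⟨_, hsub.1, _, hsub.2.1, _, hsub.2.2,
      ranksInOrder_triple hac hab hbc.symm, ranksInOrder_triple hbc.symm hac.symm hab.symm,
      ranksInOrder_triple hab.symm hbc hac⟩
  · rintro ⟨h₁, h₂⟩ x hx y hy z hz ⟨u, hu, v, hv, w, hw, hxyz, hyzx, hzxy⟩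
    have hcard : ({a, b, c} : Finset α).card = 3 :=
      Finset.card_eq_three.2 ⟨a, b, c, hab, hac, hbc, rfl⟩
    obtain ⟨hxy, hxz, hyz⟩ := hxyz.ne
    rw [hxyz.eq_of_isLinOrd (hlin u hu) hcard hz] at hu
    rw [hyzx.eq_of_isLinOrd (hlin v hv) hcard hx] at hv
    rw [hzxy.eq_of_isLinOrd (hlin w hw) hcard hy] at hw
    simp only [Set.insert_subset_iff, Set.singleton_subset_iff, not_and] at h₁ h₂
    simp only [Finset.mem_insert, Finset.mem_singleton] at hx hy hz
    rcases hx with rfl | rfl | rfl <;> rcases hy with rfl | rfl | rfl <;>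
      rcases hz with rfl | rfl | rfl <;> simp_all

theorem maxCondorcet_of_mem_maxDomainsThree {x y z : α} (hxy : x ≠ y) (hxz : x ≠ z) (hyz : y ≠ z)
    {E : Set (List α)} (hE : E ∈ maxDomainsThree x y z) : MaxCondorcet {x, y, z} E := by
  refine ⟨(isCondorcet_three_iff hxy hxz hyz).2 ⟨fun w hw => ?_, ?_⟩, fun D hD hED w hw => ?_⟩
  · rw [isLinOrd_three_iff hxy hxz hyz]
    rcases hE with rfl | rfl | rfl <;>
      simp only [Set.mem_insert_iff, Set.mem_singleton_iff] at hw <;> tauto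
  · rcases hE with rfl | rfl | rfl <;>
      simp [Set.insert_subset_iff, hxy, hxz, hyz, hxy.symm, hxz.symm, hyz.symm]
  · obtain ⟨hlin, h₁, h₂⟩ := (isCondorcet_three_iff hxy hxz hyz).1 hD
    rcases hE with rfl | rfl | rfl <;>
      simp only [Set.insert_subset_iff, Set.singleton_subset_iff, not_and] at h₁ h₂ hED <;>
      rcases (isLinOrd_three_iff hxy hxz hyz).1 (hlin w hw) with
        rfl | rfl | rfl | rfl | rfl | rfl <;> simp_all

theorem exists_mem_maxDomainsThree_of_cycles {a b c : α} (hab : a ≠ b) (hac : a ≠ c)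
    (hbc : b ≠ c) {u v : List α} (hu : u ∈ ({[a, b, c], [b, c, a], [c, a, b]} : Set (List α)))
    (hv : v ∈ ({[a, c, b], [c, b, a], [b, a, c]} : Set (List α))) :
    ∃ x y z, [x, y, z].Perm [a, b, c] ∧ ∃ E ∈ maxDomainsThree x y z,
      ∀ w, IsLinOrd {a, b, c} w → w ≠ u → w ≠ v → w ∈ E := by
  have r₀ : [a, b, c].Perm [a, b, c] := .refl _
  have r₁ : [b, c, a].Perm [a, b, c] := List.perm_append_comm (l₁ := [b, c]) (l₂ := [a])
  have r₂ : [c, a, b].Perm [a, b, c] := List.perm_append_comm (l₁ := [c]) (l₂ := [a, b])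
  simp only [Set.mem_insert_iff, Set.mem_singleton_iff] at hu hv
  -- Deleting `u` and `v` leaves the first, second or third domain, relabelled by a rotation of
  -- `a, b, c`, according as `u` and `v` share their top, are mutually reverse, or share their
  -- bottom.
  (rcases hu with rfl | rfl | rfl <;> rcases hv with rfl | rfl | rfl) <;>
  [refine ⟨c, a, b, r₂, _, Or.inl rfl, ?_⟩;
    refine ⟨b, c, a, r₁, _, Or.inr (Or.inl rfl), ?_⟩;
    refine ⟨b, c, a, r₁, _, Or.inr (Or.inr rfl), ?_⟩;
    refine ⟨c, a, b, r₂, _, Or.inr (Or.inl rfl), ?_⟩;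
    refine ⟨c, a, b, r₂, _, Or.inr (Or.inr rfl), ?_⟩;
    refine ⟨a, b, c, r₀, _, Or.inl rfl, ?_⟩;
    refine ⟨a, b, c, r₀, _, Or.inr (Or.inr rfl), ?_⟩;
    refine ⟨b, c, a, r₁, _, Or.inl rfl, ?_⟩;
    refine ⟨a, b, c, r₀, _, Or.inr (Or.inl rfl), ?_⟩]
  all_goals
    intro w hw
    rcases (isLinOrd_three_iff hab hac hbc).1 hw with rfl | rfl | rfl | rfl | rfl | rfl <;>
      simp [hab, hac, hbc, hab.symm, hac.symm, hbc.symm]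

theorem IsCondorcet.exists_subset_mem_maxDomainsThree {a b c : α} (hab : a ≠ b) (hac : a ≠ c)
    (hbc : b ≠ c) {D : Set (List α)} (hD : IsCondorcet {a, b, c} D) :
    ∃ x y z, [x, y, z].Perm [a, b, c] ∧ ∃ E ∈ maxDomainsThree x y z, D ⊆ E := by
  obtain ⟨hlin, h₁, h₂⟩ := (isCondorcet_three_iff hab hac hbc).1 hD
  obtain ⟨u, hu, huD⟩ := Set.not_subset.1 h₁
  obtain ⟨v, hv, hvD⟩ := Set.not_subset.1 h₂
  obtain ⟨x, y, z, hperm, E, hE, hcompl⟩ := exists_mem_maxDomainsThree_of_cycles hab hac hbc hu hv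
  exact ⟨x, y, z, hperm, E, hE, fun w hw =>
    hcompl w (hlin w hw) (ne_of_mem_of_not_mem hw huD) (ne_of_mem_of_not_mem hw hvD)⟩

theorem maxCondorcet_of_perm_of_mem_maxDomainsThree {a b c x y z : α} (hnd : [a, b, c].Nodup)
    (hperm : [x, y, z].Perm [a, b, c]) {E : Set (List α)} (hE : E ∈ maxDomainsThree x y z) :
    MaxCondorcet {a, b, c} E := by
  obtain ⟨⟨hxy, hxz⟩, hyz⟩ : (x ≠ y ∧ x ≠ z) ∧ y ≠ z := by simpa using hperm.nodup_iff.2 hnd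
  have hA : ({x, y, z} : Finset α) = {a, b, c} := by simpa using List.toFinset_eq_of_perm _ _ hperm
  exact hA ▸ maxCondorcet_of_mem_maxDomainsThree hxy hxz hyz hE

theorem maxCondorcet_three_iff {a b c : α} (hab : a ≠ b) (hac : a ≠ c) (hbc : b ≠ c)
    {D : Set (List α)} :
    MaxCondorcet {a, b, c} D ↔ ∃ x y z, [x, y, z].Perm [a, b, c] ∧ D ∈ maxDomainsThree x y z := by
  have hnd : [a, b, c].Nodup := by simp [hab, hac, hbc]
  refine ⟨fun hD => ?_, fun ⟨x, y, z, hperm, hD⟩ =>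
    maxCondorcet_of_perm_of_mem_maxDomainsThree hnd hperm hD⟩
  obtain ⟨x, y, z, hperm, E, hE, hDE⟩ := hD.1.exists_subset_mem_maxDomainsThree hab hac hbc
  have hEmax := maxCondorcet_of_perm_of_mem_maxDomainsThree hnd hperm hE
  exact ⟨x, y, z, hperm, (hDE.antisymm (hD.2 E hEmax.1 hDE)).symm ▸ hE⟩

theorem MaxCondorcet.ncard_eq_four {a b c : α} (hab : a ≠ b) (hac : a ≠ c) (hbc : b ≠ c)
    {D : Set (List α)} (hD : MaxCondorcet {a, b, c} D) : D.ncard = 4 := by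
  obtain ⟨x, y, z, hperm, hE⟩ := (maxCondorcet_three_iff hab hac hbc).1 hD
  obtain ⟨⟨hxy, hxz⟩, hyz⟩ : (x ≠ y ∧ x ≠ z) ∧ y ≠ z := by
    simpa using hperm.nodup_iff.2 (by simp [hab, hac, hbc])
  exact ncard_of_mem_maxDomainsThree hxy hxz hyz hE

end Condorcet

/-- up to relabelling of alternatives there are exactly three
maximal Condorcet domains on a 3-element set `{a,b,c}`, namely
`{abc, acb, cab, cba}`, `{abc, bca, acb, cba}` and `{abc, bac, bca, cba}`;
in particular every maximal Condorcet domain on 3 alternatives has exactly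
4 elements. -/
theorem stmt_15 [DecidableEq α] (a b c : α)
    (hab : a ≠ b) (hac : a ≠ c) (hbc : b ≠ c) (D : Set (List α)) :
    (MaxCondorcet ({a, b, c} : Finset α) D ↔
      ∃ σ : Equiv.Perm α, (∀ x ∈ ({a, b, c} : Finset α), σ x ∈ ({a, b, c} : Finset α)) ∧
        (D = List.map σ '' ({[a, b, c], [a, c, b], [c, a, b], [c, b, a]} : Set (List α)) ∨
         D = List.map σ '' ({[a, b, c], [b, c, a], [a, c, b], [c, b, a]} : Set (List α)) ∨
         D = List.map σ '' ({[a, b, c], [b, a, c], [b, c, a], [c, b, a]} : Set (List α)))) ∧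
    (MaxCondorcet ({a, b, c} : Finset α) D → D.ncard = 4) := by
  have hnd : [a, b, c].Nodup := by simp [hab, hac, hbc]
  have hmem {t : α} : t ∈ ({a, b, c} : Finset α) ↔ t ∈ [a, b, c] := by simp
  simp only [Set.image_insert_eq, Set.image_singleton, List.map_cons, List.map_nil, hmem]
  refine ⟨⟨fun hD => ?_, fun ⟨σ, hσ, hD⟩ => ?_⟩, fun hD => hD.ncard_eq_four hab hac hbc⟩
  · obtain ⟨x, y, z, hperm, hD⟩ := (maxCondorcet_three_iff hab hac hbc).1 hD
    obtain ⟨σ, hσ⟩ := hnd.exists_perm_map_eq hperm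
    refine ⟨σ, fun t ht => hperm.subset (hσ ▸ List.mem_map_of_mem ht), ?_⟩
    simp only [List.map_cons, List.map_nil, List.cons.injEq, and_true] at hσ
    obtain ⟨rfl, rfl, rfl⟩ := hσ
    exact hD
  · exact (maxCondorcet_three_iff hab hac hbc).2 ⟨σ a, σ b, σ c, hnd.map_perm_of_mapsTo hσ, hD⟩
end
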